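/- Let X be a complex Banach space, let T ∈ L(X) be a quasi-Fredholm operator of degree d and let F ∈ L(X) be a finite-rank operator, so that T + F is quasi-Fredholm of some degree d'. If R(T) + N(T^d) has finite codimension in X, then R(T + F) + N((T + F)^{d'}) has finite codimension in X. -/

import Mathlib

noncomputable section

/-- The two-sided ideal `F₀(X)` of finite-rank operators in `L(X)`. -/
def finiteRankIdeal (X : Type*) [NormedAddCommGroup X] [NormedSpace ℂ X] :
    TwoSidedIdeal (X →L[ℂ] X) :=
  TwoSidedIdeal.mk'
    {F : X →L[ℂ] X | FiniteDimensional ℂ (LinearMap.range (↑F : X →ₗ[ℂ] X))}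
    (by
      show FiniteDimensional ℂ (LinearMap.range (↑(0 : X →L[ℂ] X) : X →ₗ[ℂ] X))
      rw [show LinearMap.range (↑(0 : X →L[ℂ] X) : X →ₗ[ℂ] X) = ⊥ by ext x; simp [eq_comm]]
      infer_instance)
    (by
      intro x y hx hy
      haveI : FiniteDimensional ℂ (LinearMap.range (↑x : X →ₗ[ℂ] X)) := hx
      haveI : FiniteDimensional ℂ (LinearMap.range (↑y : X →ₗ[ℂ] X)) := hy
      have hle : LinearMap.range (↑(x + y) : X →ₗ[ℂ] X) ≤ LinearMap.range (↑x : X →ₗ[ℂ] X) ⊔ LinearMap.range (↑y : X →ₗ[ℂ] X) := by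
        rintro z ⟨w, rfl⟩
        exact Submodule.add_mem_sup (LinearMap.mem_range_self (x : X →ₗ[ℂ] X) w) (LinearMap.mem_range_self (y : X →ₗ[ℂ] X) w)
      exact Submodule.finiteDimensional_of_le hle)
    (by
      intro x hx
      haveI : FiniteDimensional ℂ (LinearMap.range (↑x : X →ₗ[ℂ] X)) := hx
      have hle : LinearMap.range (↑(-x) : X →ₗ[ℂ] X) ≤ LinearMap.range (↑x : X →ₗ[ℂ] X) := by
        rintro z ⟨w, rfl⟩; exact ⟨-w, by simp⟩
      exact Submodule.finiteDimensional_of_le hle)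
    (by
      intro x y hy
      haveI : FiniteDimensional ℂ (LinearMap.range (↑y : X →ₗ[ℂ] X)) := hy
      haveI : FiniteDimensional ℂ (Submodule.map (x : X →ₗ[ℂ] X) (LinearMap.range (↑y : X →ₗ[ℂ] X))) :=
        Module.Finite.map _ _
      have hle : LinearMap.range (↑(x * y) : X →ₗ[ℂ] X) ≤ Submodule.map (x : X →ₗ[ℂ] X) (LinearMap.range (↑y : X →ₗ[ℂ] X)) := by
        rintro z ⟨w, rfl⟩; exact ⟨y w, LinearMap.mem_range_self (y : X →ₗ[ℂ] X) w, rfl⟩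
      exact Submodule.finiteDimensional_of_le hle)
    (by
      intro x y hx
      haveI : FiniteDimensional ℂ (LinearMap.range (↑x : X →ₗ[ℂ] X)) := hx
      have hle : LinearMap.range (↑(x * y) : X →ₗ[ℂ] X) ≤ LinearMap.range (↑x : X →ₗ[ℂ] X) := by
        rintro z ⟨w, rfl⟩; exact ⟨y w, rfl⟩
      exact Submodule.finiteDimensional_of_le hle)

/-- Restriction of a bounded operator to an invariant subspace, as a bounded
operator on that subspace. -/
def clmRestrict {X : Type*} [NormedAddCommGroup X] [NormedSpace ℂ X]
    (T : X →L[ℂ] X) (M : Submodule ℂ X) (h : ∀ x ∈ M, T x ∈ M) : M →L[ℂ] M where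
  toLinearMap := (T : X →ₗ[ℂ] X).restrict h
  cont := by
    show Continuous fun x : M => (⟨T x, h x x.2⟩ : M)
    exact Continuous.subtype_mk (T.continuous.comp continuous_subtype_val) _

/-- The set `Δ(T)` of stable iteration indices:
`Δ(T) = {n : ∀ m ≥ n, N(T) ∩ R(T^n) ⊆ N(T) ∩ R(T^m)}`. -/
def disSet {X : Type*} [NormedAddCommGroup X] [NormedSpace ℂ X] (T : X →L[ℂ] X) : Set ℕ :=
  {n | ∀ m, n ≤ m →
    (LinearMap.ker (↑T : X →ₗ[ℂ] X) ⊓ LinearMap.range (↑(T ^ n) : X →ₗ[ℂ] X) : Submodule ℂ X) ≤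
      LinearMap.ker (↑T : X →ₗ[ℂ] X) ⊓ LinearMap.range (↑(T ^ m) : X →ₗ[ℂ] X)}

/-- `T` is quasi-Fredholm of degree `d` : `dis(T) = d` (i.e. `d` is the least element of
`Δ(T)`), `N(T) ∩ R(T^d)` is a closed complemented subspace of `X`, and `R(T) + N(T^d)` is a
closed complemented subspace of `X`. -/
def IsQuasiFredholmOfDegree {X : Type*} [NormedAddCommGroup X] [NormedSpace ℂ X]
    (T : X →L[ℂ] X) (d : ℕ) : Prop :=
  IsLeast (disSet T) d ∧
    IsClosed ((LinearMap.ker (↑T : X →ₗ[ℂ] X) ⊓ LinearMap.range (↑(T ^ d) : X →ₗ[ℂ] X) : Submodule ℂ X) : Set X) ∧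
    (LinearMap.ker (↑T : X →ₗ[ℂ] X) ⊓ LinearMap.range (↑(T ^ d) : X →ₗ[ℂ] X)).ClosedComplemented ∧
    IsClosed ((LinearMap.range (↑T : X →ₗ[ℂ] X) ⊔ LinearMap.ker (↑(T ^ d) : X →ₗ[ℂ] X) : Submodule ℂ X) : Set X) ∧
    (LinearMap.range (↑T : X →ₗ[ℂ] X) ⊔ LinearMap.ker (↑(T ^ d) : X →ₗ[ℂ] X)).ClosedComplemented

/-- `T` is quasi-Fredholm if it is quasi-Fredholm of some degree `d`. -/
def IsQuasiFredholm {X : Type*} [NormedAddCommGroup X] [NormedSpace ℂ X]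
    (T : X →L[ℂ] X) : Prop :=
  ∃ d : ℕ, IsQuasiFredholmOfDegree T d

/-- Left semi-Fredholm: closed range, finite-dimensional kernel, and range complemented
(i.e. the range of a bounded projection). -/
def IsLeftSemiFredholm {Y : Type*} [NormedAddCommGroup Y] [NormedSpace ℂ Y]
    (S : Y →L[ℂ] Y) : Prop :=
  IsClosed ((LinearMap.range (↑S : Y →ₗ[ℂ] Y) : Submodule ℂ Y) : Set Y) ∧
    FiniteDimensional ℂ (LinearMap.ker (↑S : Y →ₗ[ℂ] Y)) ∧ (LinearMap.range (↑S : Y →ₗ[ℂ] Y)).ClosedComplemented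

/-- Right semi-Fredholm: closed range of finite codimension, and kernel complemented
(i.e. the range of a bounded projection). -/
def IsRightSemiFredholm {Y : Type*} [NormedAddCommGroup Y] [NormedSpace ℂ Y]
    (S : Y →L[ℂ] Y) : Prop :=
  IsClosed ((LinearMap.range (↑S : Y →ₗ[ℂ] Y) : Submodule ℂ Y) : Set Y) ∧
    FiniteDimensional ℂ (Y ⧸ LinearMap.range (↑S : Y →ₗ[ℂ] Y)) ∧ (LinearMap.ker (↑S : Y →ₗ[ℂ] Y)).ClosedComplemented

/-- Fredholm: closed range, finite-dimensional kernel, range of finite codimension. -/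
def IsFredholmOp {Y : Type*} [NormedAddCommGroup Y] [NormedSpace ℂ Y]
    (S : Y →L[ℂ] Y) : Prop :=
  IsClosed ((LinearMap.range (↑S : Y →ₗ[ℂ] Y) : Submodule ℂ Y) : Set Y) ∧
    FiniteDimensional ℂ (LinearMap.ker (↑S : Y →ₗ[ℂ] Y)) ∧ FiniteDimensional ℂ (Y ⧸ LinearMap.range (↑S : Y →ₗ[ℂ] Y))

/-- Regular operator: kernel and range are complemented (closed) subspaces. -/
def IsRegularOp {Y : Type*} [NormedAddCommGroup Y] [NormedSpace ℂ Y]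
    (S : Y →L[ℂ] Y) : Prop :=
  (LinearMap.ker (↑S : Y →ₗ[ℂ] Y)).ClosedComplemented ∧ (LinearMap.range (↑S : Y →ₗ[ℂ] Y)).ClosedComplemented

lemma range_pow_invariant {X : Type*} [NormedAddCommGroup X] [NormedSpace ℂ X]
    (T : X →L[ℂ] X) (n : ℕ) :
    ∀ x ∈ LinearMap.range (↑(T ^ n) : X →ₗ[ℂ] X), T x ∈ LinearMap.range (↑(T ^ n) : X →ₗ[ℂ] X) := by
  rintro x ⟨y, rfl⟩
  exact ⟨T y, by
    rw [ContinuousLinearMap.coe_coe, ← ContinuousLinearMap.mul_apply, ← ContinuousLinearMap.mul_apply, ← pow_succ,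
      ← pow_succ']⟩

/-- B-Fredholm: for some `n`, `R(T^n)` is closed and the restriction of `T` to `R(T^n)`,
viewed as an operator from `R(T^n)` to `R(T^n)`, is a Fredholm operator. -/
def IsBFredholm {X : Type*} [NormedAddCommGroup X] [NormedSpace ℂ X]
    (T : X →L[ℂ] X) : Prop :=
  ∃ n : ℕ, IsClosed ((LinearMap.range (↑(T ^ n) : X →ₗ[ℂ] X) : Submodule ℂ X) : Set X) ∧
    IsFredholmOp (clmRestrict T (LinearMap.range (↑(T ^ n) : X →ₗ[ℂ] X)) (range_pow_invariant T n))

/-- Left Drazin invertible element of a unital ring: there is an idempotent `p`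
commuting with `a` such that `a * p` is nilpotent and `a + p` has a left inverse
commuting with `p`. -/
def IsLeftDrazinInvertible {A : Type*} [Ring A] (a : A) : Prop :=
  ∃ p : A, IsIdempotentElem p ∧ a * p = p * a ∧ IsNilpotent (a * p) ∧
    ∃ b : A, b * (a + p) = 1 ∧ b * p = p * b

/-- Right Drazin invertible element of a unital ring: there is an idempotent `p`
commuting with `a` such that `a * p` is nilpotent and `a + p` has a right inverse
commuting with `p`. -/
def IsRightDrazinInvertible {A : Type*} [Ring A] (a : A) : Prop :=
  ∃ p : A, IsIdempotentElem p ∧ a * p = p * a ∧ IsNilpotent (a * p) ∧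
    ∃ b : A, (a + p) * b = 1 ∧ b * p = p * b

/-- Drazin invertible element of a unital ring: there is an idempotent `p`
commuting with `a` such that `a * p` is nilpotent and `a + p` is invertible. -/
def IsDrazinInvertible {A : Type*} [Ring A] (a : A) : Prop :=
  ∃ p : A, IsIdempotentElem p ∧ a * p = p * a ∧ IsNilpotent (a * p) ∧ IsUnit (a + p)

end

/-!
For every operator `S`, `S ^ n` induces an isomorphism
`X ⧸ (R(S) + N(S ^ n)) ≃ R(S ^ n) ⧸ R(S ^ (n + 1))`, so `R(S) + N(S ^ n)` has finite codimension
iff `R(S ^ n)` lies in `R(S ^ (n + 1))` up to a finite-dimensional subspace. That property passes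
from `T` to `T + F`, because `(T + F) ^ k - T ^ k` has finite rank for every `k`. Take
`n = max d d'`: finite codimension passes from `d` up to `n` since `N(T ^ d) ≤ N(T ^ n)`, and from
`n` back down to `d'` for `T + F` since `d' ∈ Δ(T + F)` makes `R(T + F) + N((T + F) ^ k)` stop
growing for `k ≥ d'`.
-/

section

open LinearMap Submodule
open scoped LinearMap.FiniteRangeSetoid

theorem Submodule.exists_finiteDimensional_le_sup_iff {K V : Type*} [DivisionRing K]
    [AddCommGroup V] [Module K V] (p q : Submodule K V) :
    (∃ W : Submodule K V, FiniteDimensional K W ∧ p ≤ q ⊔ W) ↔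
      FiniteDimensional K (p.map q.mkQ) := by
  constructor
  · rintro ⟨W, hW, hpW⟩
    refine Submodule.finiteDimensional_of_le (S₂ := W.map q.mkQ) ?_
    calc p.map q.mkQ ≤ (q ⊔ W).map q.mkQ := map_mono hpW
      _ = W.map q.mkQ := by rw [map_sup, mkQ_map_self, bot_sup_eq]
  · intro hp
    obtain ⟨σ, hσ⟩ := (q.mkQ.submoduleMap p).exists_rightInverse_of_surjective
      (range_eq_top.2 (q.mkQ.submoduleMap_surjective p))
    refine ⟨range (p.subtype ∘ₗ σ), inferInstance, fun x hx => ?_⟩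
    set y : p.map q.mkQ := ⟨q.mkQ x, x, hx, rfl⟩
    have hσy : q.mkQ (σ y) = q.mkQ x := congr(Subtype.val ($hσ y))
    exact mem_sup.2 ⟨_, (Quotient.eq q).1 hσy.symm, _, mem_range_self _ y, sub_add_cancel _ _⟩

theorem LinearMap.range_le_range_sup_range_sub {R M M₂ : Type*} [Ring R] [AddCommGroup M]
    [Module R M] [AddCommGroup M₂] [Module R M₂] (u v : M →ₗ[R] M₂) :
    range u ≤ range v ⊔ range (u - v) := by
  simpa using range_add_le v (u - v)

variable {K V : Type*} [Field K] [AddCommGroup V] [Module K V]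

theorem LinearMap.FiniteRangeSetoid.exists_finiteDimensional_range_le_sup {V₂ : Type*}
    [AddCommGroup V₂] [Module K V₂] {u v : V →ₗ[K] V₂} (h : u ≈ v) :
    ∃ W : Submodule K V₂, FiniteDimensional K W ∧ range u ≤ range v ⊔ W :=
  ⟨range (u - v), IsNoetherian.iff_fg.1 (equiv_iff_hasNoetherianRange.1 h).isNoetherian_range,
    range_le_range_sup_range_sub u v⟩

namespace Module.End

section Ring

variable {R M : Type*} [Ring R] [AddCommGroup M] [Module R M] (f : Module.End R M)

theorem comap_pow_range_pow_succ (n : ℕ) :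
    (range (f ^ (n + 1))).comap (f ^ n) = range f ⊔ ker (f ^ n) := by
  apply le_antisymm
  · rintro x ⟨y, hy⟩
    refine mem_sup.2 ⟨f y, mem_range_self f y, x - f y, ?_, add_sub_cancel _ _⟩
    rw [mem_ker, map_sub, ← hy, pow_succ, mul_apply, sub_self]
  · rw [sup_le_iff]
    constructor
    · rintro _ ⟨y, rfl⟩
      exact ⟨y, by rw [pow_succ, mul_apply]⟩
    · intro x hx
      rw [mem_comap, mem_ker.1 hx]
      exact zero_mem _

/-- Induced by `f ^ n`; the codomain is `R(f ^ n) / R(f ^ (n + 1))`, realised inside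
`M ⧸ R(f ^ (n + 1))`. -/
noncomputable def quotientRangeSupKerPowEquiv (n : ℕ) :
    (M ⧸ (range f ⊔ ker (f ^ n))) ≃ₗ[R] (range (f ^ n)).map (range (f ^ (n + 1))).mkQ :=
  (quotEquivOfEq _ _ (by rw [ker_comp, ker_mkQ, comap_pow_range_pow_succ])).trans <|
    ((range (f ^ (n + 1))).mkQ ∘ₗ f ^ n).quotKerEquivRange.trans
      (LinearEquiv.ofEq _ _ (range_comp _ _))

theorem range_sup_ker_pow_le {e : ℕ}
    (he : ∀ m, e ≤ m → ker f ⊓ range (f ^ e) ≤ ker f ⊓ range (f ^ m)) {n : ℕ} (hn : e ≤ n) :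
    range f ⊔ ker (f ^ n) ≤ range f ⊔ ker (f ^ e) := by
  induction n, hn using Nat.le_induction with
  | base => exact le_rfl
  | succ n hn ih =>
    refine sup_le le_sup_left (le_trans ?_ ih)
    rw [← comap_pow_range_pow_succ]
    intro x hx
    have hfx : (f ^ n) x ∈ ker f ⊓ range (f ^ e) :=
      ⟨by rwa [SetLike.mem_coe, mem_ker, ← mul_apply, ← pow_succ'],
        f.iterateRange.monotone hn ⟨x, rfl⟩⟩
    exact (he (n + 1) (by omega) hfx).2

end Ring

theorem cofg_range_sup_ker_pow_iff (f : Module.End K V) (n : ℕ) :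
    (range f ⊔ ker (f ^ n)).CoFG ↔
      ∃ W : Submodule K V, FiniteDimensional K W ∧ range (f ^ n) ≤ range (f ^ (n + 1)) ⊔ W := by
  rw [exists_finiteDimensional_le_sup_iff]
  exact Module.Finite.equiv_iff (quotientRangeSupKerPowEquiv f n)

theorem pow_equiv_pow {R M : Type*} [CommRing R] [AddCommGroup M] [Module R M]
    {f g : Module.End R M} (h : f ≈ g) (n : ℕ) : f ^ n ≈ g ^ n := by
  induction n with
  | zero => rfl
  | succ n ih => simpa only [pow_succ, mul_eq_comp] using FiniteRangeSetoid.equiv_comp h ih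

theorem cofg_range_sup_ker_pow_of_equiv {f g : Module.End K V} (hfg : f ≈ g)
    {d e : ℕ} (he : ∀ m, e ≤ m → ker g ⊓ range (g ^ e) ≤ ker g ⊓ range (g ^ m))
    (hf : (range f ⊔ ker (f ^ d)).CoFG) : (range g ⊔ ker (g ^ e)).CoFG := by
  set n := max d e
  have hfn : (range f ⊔ ker (f ^ n)).CoFG :=
    hf.of_le (sup_le_sup_left (f.iterateKer.monotone (le_max_left d e)) _)
  obtain ⟨W, _, hW⟩ := (cofg_range_sup_ker_pow_iff f n).1 hfn
  obtain ⟨W₁, _, hW₁⟩ :=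
    FiniteRangeSetoid.exists_finiteDimensional_range_le_sup (pow_equiv_pow (Setoid.symm hfg) n)
  obtain ⟨W₂, _, hW₂⟩ :=
    FiniteRangeSetoid.exists_finiteDimensional_range_le_sup (pow_equiv_pow hfg (n + 1))
  have hgn : (range g ⊔ ker (g ^ n)).CoFG := by
    refine (cofg_range_sup_ker_pow_iff g n).2 ⟨W₂ ⊔ W ⊔ W₁, inferInstance, ?_⟩
    calc range (g ^ n) ≤ range (f ^ n) ⊔ W₁ := hW₁
      _ ≤ range (f ^ (n + 1)) ⊔ W ⊔ W₁ := by gcongr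
      _ ≤ range (g ^ (n + 1)) ⊔ W₂ ⊔ W ⊔ W₁ := by gcongr
      _ = range (g ^ (n + 1)) ⊔ (W₂ ⊔ W ⊔ W₁) := by simp only [sup_assoc]
  exact hgn.of_le (g.range_sup_ker_pow_le he (le_max_right d e))

end Module.End

end

theorem finiteCodim_range_sup_kernel_perturbation_general
    (X : Type*) [NormedAddCommGroup X] [NormedSpace ℂ X]
    (T F : X →L[ℂ] X) (d d' : ℕ)
    (hF : FiniteDimensional ℂ (LinearMap.range (↑F : X →ₗ[ℂ] X)))
    (hTF : IsQuasiFredholmOfDegree (T + F) d')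
    (hcodim : FiniteDimensional ℂ
      (X ⧸ (LinearMap.range (↑T : X →ₗ[ℂ] X) ⊔ LinearMap.ker (↑(T ^ d) : X →ₗ[ℂ] X)))) :
    FiniteDimensional ℂ
      (X ⧸ (LinearMap.range (↑(T + F) : X →ₗ[ℂ] X) ⊔ LinearMap.ker (↑((T + F) ^ d') : X →ₗ[ℂ] X))) := by
  have hdis := hTF.1.1
  simp only [disSet, Set.mem_ofPred_eq, ContinuousLinearMap.toLinearMap_pow,
    ContinuousLinearMap.toLinearMap_add] at hdis
  rw [ContinuousLinearMap.toLinearMap_pow] at hcodim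
  rw [ContinuousLinearMap.toLinearMap_pow, ContinuousLinearMap.toLinearMap_add]
  refine Module.End.cofg_range_sup_ker_pow_of_equiv ?_ hdis hcodim
  rw [LinearMap.FiniteRangeSetoid.equiv_iff_hasNoetherianRange, sub_add_cancel_left]
  exact LinearMap.HasNoetherianRange.neg (IsNoetherian.iff_fg.2 hF)

/-- If `T` is quasi-Fredholm of degree `d`, `F` has finite rank and `T + F` is
quasi-Fredholm of degree `d'`, then finite codimension of `R(T) + N(T^d)` implies finite
codimension of `R(T+F) + N((T+F)^{d'})`. -/
theorem finiteCodim_range_sup_kernel_perturbation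
    (X : Type*) [NormedAddCommGroup X] [NormedSpace ℂ X] [CompleteSpace X]
    (T F : X →L[ℂ] X) (d d' : ℕ)
    (hT : IsQuasiFredholmOfDegree T d)
    (hF : FiniteDimensional ℂ (LinearMap.range (↑F : X →ₗ[ℂ] X)))
    (hTF : IsQuasiFredholmOfDegree (T + F) d')
    (hcodim : FiniteDimensional ℂ
      (X ⧸ (LinearMap.range (↑T : X →ₗ[ℂ] X) ⊔ LinearMap.ker (↑(T ^ d) : X →ₗ[ℂ] X)))) :
    FiniteDimensional ℂ
      (X ⧸ (LinearMap.range (↑(T + F) : X →ₗ[ℂ] X) ⊔ LinearMap.ker (↑((T + F) ^ d') : X →ₗ[ℂ] X))) :=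
  finiteCodim_range_sup_kernel_perturbation_general X T F d d' hF hTF hcodim
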